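/- arXiv:1908.09915 — 3 statements merged into one kernel-verified Lean document; each statement's English description precedes it below -/
import Mathlib

section
/- Under Assumption 1, the map F satisfies (λ − ε)‖y‖₂ ≤ ‖F(x) y‖₂ ≤ (Λ + ε)‖y‖₂ for all x, y ∈ ℝⁿ. -/
/-!
Strong convexity makes `∇f` strongly monotone, and convexity together with `Λ`-smoothness makes it
cocoercive, `⟪∇f u - ∇f v, u - v⟫ ≥ Λ⁻¹ ‖∇f u - ∇f v‖²`. By Cauchy–Schwarz the symmetric difference
quotient `(∇f (x + y) - ∇f (x - y)) / 2` therefore has norm between `λ‖y‖` and `Λ‖y‖`, and `F x y`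
lies within `ε‖y‖` of it.
-/

open scoped RealInnerProductSpace

noncomputable def mulVecE {n m : ℕ} (A : Matrix (Fin n) (Fin m) ℝ)
    (v : EuclideanSpace ℝ (Fin m)) : EuclideanSpace ℝ (Fin n) :=
  Matrix.toEuclideanLin A v

lemma mul_le_of_mul_sq_le_mul {c s t : ℝ} (hs : 0 ≤ s) (ht : 0 ≤ t) (h : c * t ^ 2 ≤ s * t) :
    c * t ≤ s := by
  rcases ht.eq_or_lt with rfl | ht
  · simpa using hs
  · exact le_of_mul_le_mul_right (by nlinarith) ht

section Gradient

variable {E : Type*} [NormedAddCommGroup E] [InnerProductSpace ℝ E] {f : E → ℝ} {g : E → E}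
  {lam Lam : ℝ}

/-- Bregman divergence of `f`, with `g` standing for `∇f`. -/
def bregmanDiv (f : E → ℝ) (g : E → E) (x y : E) : ℝ :=
  f y - f x - ⟪g x, y - x⟫

lemma bregmanDiv_add_bregmanDiv (u v : E) :
    bregmanDiv f g u v + bregmanDiv f g v u = ⟪g u - g v, u - v⟫ := by
  rw [bregmanDiv, bregmanDiv, inner_sub_left, ← neg_sub u v, inner_neg_right]
  ring

lemma mul_norm_sub_sq_le_inner_sub
    (hsc : ∀ x y, lam / 2 * ‖y - x‖ ^ 2 ≤ bregmanDiv f g x y) (u v : E) :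
    lam * ‖u - v‖ ^ 2 ≤ ⟪g u - g v, u - v⟫ := by
  have h₁ := hsc u v
  have h₂ := hsc v u
  rw [norm_sub_rev] at h₁
  linarith [bregmanDiv_add_bregmanDiv (f := f) (g := g) u v]

/-- One half of cocoercivity: compare `f` at `v` and at the gradient step `v - Λ⁻¹ (g v - g u)`. -/
lemma inv_two_mul_norm_sub_sq_le_bregmanDiv (hLam : 0 < Lam)
    (hconv : ∀ x y, 0 ≤ bregmanDiv f g x y)
    (hsm : ∀ x y, bregmanDiv f g x y ≤ Lam / 2 * ‖y - x‖ ^ 2) (u v : E) :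
    (2 * Lam)⁻¹ * ‖g v - g u‖ ^ 2 ≤ bregmanDiv f g u v := by
  set q := g v - g u
  have hu := hconv u (v - Lam⁻¹ • q)
  have hv := hsm v (v - Lam⁻¹ • q)
  have hq : Lam⁻¹ * ⟪g v, q⟫ - Lam⁻¹ * ⟪g u, q⟫ = Lam⁻¹ * ‖q‖ ^ 2 := by
    rw [← mul_sub, ← inner_sub_left, real_inner_self_eq_norm_sq]
  simp only [bregmanDiv, sub_right_comm v _ u, sub_sub_cancel_left, inner_sub_right,
    inner_neg_right, real_inner_smul_right, norm_neg, norm_smul, mul_pow, Real.norm_eq_abs,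
    sq_abs] at hu hv ⊢
  have hcoef : Lam / 2 * (Lam⁻¹ ^ 2 * ‖q‖ ^ 2) = (2 * Lam)⁻¹ * ‖q‖ ^ 2 := by
    field_simp
  have hsplit : Lam⁻¹ * ‖q‖ ^ 2 = 2 * ((2 * Lam)⁻¹ * ‖q‖ ^ 2) := by
    field_simp
  linear_combination hu + hv - hq + hcoef - hsplit

lemma inv_mul_norm_sq_le_inner_sub (hLam : 0 < Lam)
    (hconv : ∀ x y, 0 ≤ bregmanDiv f g x y)
    (hsm : ∀ x y, bregmanDiv f g x y ≤ Lam / 2 * ‖y - x‖ ^ 2) (u v : E) :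
    Lam⁻¹ * ‖g u - g v‖ ^ 2 ≤ ⟪g u - g v, u - v⟫ := by
  have h₁ := inv_two_mul_norm_sub_sq_le_bregmanDiv hLam hconv hsm u v
  have h₂ := inv_two_mul_norm_sub_sq_le_bregmanDiv hLam hconv hsm v u
  rw [norm_sub_rev] at h₁
  have hsplit : Lam⁻¹ = (2 * Lam)⁻¹ + (2 * Lam)⁻¹ := by
    field_simp; norm_num
  rw [← bregmanDiv_add_bregmanDiv, hsplit]
  linear_combination h₁ + h₂

lemma mul_norm_sub_le_norm_sub
    (hsc : ∀ x y, lam / 2 * ‖y - x‖ ^ 2 ≤ bregmanDiv f g x y) (u v : E) :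
    lam * ‖u - v‖ ≤ ‖g u - g v‖ :=
  mul_le_of_mul_sq_le_mul (norm_nonneg _) (norm_nonneg _)
    ((mul_norm_sub_sq_le_inner_sub hsc u v).trans (real_inner_le_norm _ _))

lemma norm_sub_le_mul_norm_sub (hLam : 0 < Lam)
    (hconv : ∀ x y, 0 ≤ bregmanDiv f g x y)
    (hsm : ∀ x y, bregmanDiv f g x y ≤ Lam / 2 * ‖y - x‖ ^ 2) (u v : E) :
    ‖g u - g v‖ ≤ Lam * ‖u - v‖ := by
  have h := mul_le_of_mul_sq_le_mul (norm_nonneg _) (norm_nonneg _)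
    ((inv_mul_norm_sq_le_inner_sub hLam hconv hsm u v).trans
      ((real_inner_le_norm _ _).trans_eq (mul_comm _ _)))
  rwa [inv_mul_le_iff₀ hLam] at h

end Gradient

theorem stmt1_general {n : ℕ} (f : EuclideanSpace ℝ (Fin n) → ℝ)
    (g : EuclideanSpace ℝ (Fin n) → EuclideanSpace ℝ (Fin n))
    (lam Lam : ℝ) (hlam : 0 < lam) (hlamLam : lam ≤ Lam)
    (hsc : ∀ x y : EuclideanSpace ℝ (Fin n), lam / 2 * ‖y - x‖ ^ 2 ≤ f y - f x - ⟪g x, y - x⟫)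
    (hsm : ∀ x y : EuclideanSpace ℝ (Fin n), f y - f x - ⟪g x, y - x⟫ ≤ Lam / 2 * ‖y - x‖ ^ 2)
    (F : EuclideanSpace ℝ (Fin n) → Matrix (Fin n) (Fin n) ℝ) (ε : ℝ)
    (hF : ∀ x y : EuclideanSpace ℝ (Fin n),
      ‖(2 : ℝ)⁻¹ • (g (x + y) - g (x - y)) - mulVecE (F x) y‖ ≤ ε * ‖y‖) :
    ∀ x y : EuclideanSpace ℝ (Fin n),
      (lam - ε) * ‖y‖ ≤ ‖mulVecE (F x) y‖ ∧ ‖mulVecE (F x) y‖ ≤ (Lam + ε) * ‖y‖ := by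
  have hLam : 0 < Lam := hlam.trans_le hlamLam
  have hconv : ∀ x y, 0 ≤ bregmanDiv f g x y := fun x y =>
    (by positivity : 0 ≤ lam / 2 * ‖y - x‖ ^ 2).trans (hsc x y)
  intro x y
  have hstep : ‖(x + y) - (x - y)‖ = 2 * ‖y‖ := by
    rw [add_sub_sub_cancel, ← two_smul ℝ, norm_smul, Real.norm_two]
  have hhalf : ‖(2 : ℝ)⁻¹ • (g (x + y) - g (x - y))‖ = ‖g (x + y) - g (x - y)‖ / 2 := by
    rw [norm_smul, norm_inv, Real.norm_two, inv_mul_eq_div]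
  have hlow := mul_norm_sub_le_norm_sub hsc (x + y) (x - y)
  have hup := norm_sub_le_mul_norm_sub hLam hconv hsm (x + y) (x - y)
  have hclose := abs_le.mp ((abs_norm_sub_norm_le _ _).trans (hF x y))
  rw [hstep] at hlow hup
  rw [hhalf] at hclose
  constructor <;> linarith

/-- Under Assumption 1 (strong convexity/smoothness of `f` and approximate
local linearity of `∇f` via `F` with error `ε`), the map `F` satisfies
`(lam − ε)‖y‖ ≤ ‖F(x) y‖ ≤ (Lam + ε)‖y‖` for all `x, y`. -/
theorem stmt1 {n : ℕ} (f : EuclideanSpace ℝ (Fin n) → ℝ)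
    (g : EuclideanSpace ℝ (Fin n) → EuclideanSpace ℝ (Fin n))
    (lam Lam : ℝ) (hlam : 0 < lam) (hlamLam : lam ≤ Lam)
    (hgrad : ∀ x, HasGradientAt f (g x) x)
    (hsc : ∀ x y : EuclideanSpace ℝ (Fin n), lam / 2 * ‖y - x‖ ^ 2 ≤ f y - f x - ⟪g x, y - x⟫)
    (hsm : ∀ x y : EuclideanSpace ℝ (Fin n), f y - f x - ⟪g x, y - x⟫ ≤ Lam / 2 * ‖y - x‖ ^ 2)
    (F : EuclideanSpace ℝ (Fin n) → Matrix (Fin n) (Fin n) ℝ) (ε : ℝ) (hε : 0 ≤ ε)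
    (hF : ∀ x y : EuclideanSpace ℝ (Fin n),
      ‖(2 : ℝ)⁻¹ • (g (x + y) - g (x - y)) - mulVecE (F x) y‖ ≤ ε * ‖y‖) :
    ∀ x y : EuclideanSpace ℝ (Fin n),
      (lam - ε) * ‖y‖ ≤ ‖mulVecE (F x) y‖ ∧ ‖mulVecE (F x) y‖ ≤ (Lam + ε) * ‖y‖ :=
  stmt1_general f g lam Lam hlam hlamLam hsc hsm F ε hF
end

section
/- Let f : ℝⁿ → ℝ be differentiable and Λ-smooth with ∇f(0) = 0, let A ∈ ℝ^{n×n} with Λ‖A‖ < 1 (spectral norm), B ∈ ℝ^{n×p}, and let (u_t)_{t≥0} be any sequence in ℝᵖ. Define x₀ = 0 and x_t = ∇f(A x_{t−1} + B u_{t−1}) for t ≥ 1. Then for every T ≥ 2, max_{1≤s≤T−1} ‖x_s‖₂ ≤ (Λ/(1 − Λ‖A‖)) · max_{1≤s≤T−1} ‖B u_{s−1}‖₂. -/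
open scoped RealInnerProductSpace

/-- Spectral (ℓ²-operator) norm of a real matrix. -/
noncomputable def specNorm {n m : ℕ} (A : Matrix (Fin n) (Fin m) ℝ) : ℝ :=
  ‖LinearMap.toContinuousLinearMap (Matrix.toEuclideanLin A)‖

/- `L / (1 - L * a) * M` is the fixed point of the contraction `y ↦ L * (a * y + M)`, so an
iteration started at `0` and dominated by that contraction never exceeds it. -/
theorem le_div_one_sub_mul_of_le_affine {r : ℕ → ℝ} {L a M : ℝ} {N : ℕ}
    (hL : 0 ≤ L) (ha : 0 ≤ a) (hLa : L * a < 1) (hM : 0 ≤ M) (h0 : r 0 = 0)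
    (hstep : ∀ t < N, r (t + 1) ≤ L * (a * r t + M)) :
    ∀ t ≤ N, r t ≤ L / (1 - L * a) * M := by
  have hpos : 0 < 1 - L * a := sub_pos.2 hLa
  have hfix : L * (a * (L / (1 - L * a) * M) + M) = L / (1 - L * a) * M := by
    field_simp
    ring
  intro t
  induction t with
  | zero => intro _; rw [h0]; positivity
  | succ t ih =>
    intro ht
    calc r (t + 1) ≤ L * (a * r t + M) := hstep t (by omega)
      _ ≤ L * (a * (L / (1 - L * a) * M) + M) := by gcongr; exact ih (by omega)
      _ = L / (1 - L * a) * M := hfix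

theorem norm_apply_add_le {E : Type*} [SeminormedAddCommGroup E] [NormedSpace ℝ E]
    {g : E → E} {L : ℝ} (hg : ∀ y, ‖g y‖ ≤ L * ‖y‖) (hL : 0 ≤ L) (A : E →L[ℝ] E) (x w : E) :
    ‖g (A x + w)‖ ≤ L * (‖A‖ * ‖x‖ + ‖w‖) :=
  calc ‖g (A x + w)‖ ≤ L * ‖A x + w‖ := hg _
    _ ≤ L * (‖A‖ * ‖x‖ + ‖w‖) := by
      gcongr
      exact (norm_add_le _ _).trans (by gcongr; exact A.le_opNorm x)

theorem stmt11 {n p : ℕ}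
    (g : EuclideanSpace ℝ (Fin n) → EuclideanSpace ℝ (Fin n))
    (Lam : ℝ) (hLam : 0 ≤ Lam)
    (hsmooth : ∀ x y : EuclideanSpace ℝ (Fin n), ‖g y - g x‖ ≤ Lam * ‖y - x‖)
    (hg0 : g 0 = 0)
    (A : Matrix (Fin n) (Fin n) ℝ) (B : Matrix (Fin n) (Fin p) ℝ)
    (hA : Lam * specNorm A < 1)
    (u : ℕ → EuclideanSpace ℝ (Fin p))
    (x : ℕ → EuclideanSpace ℝ (Fin n)) (hx0 : x 0 = 0)
    (hx : ∀ t, x (t + 1) = g (mulVecE A (x t) + mulVecE B (u t)))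
    (T : ℕ) (hT : 2 ≤ T) :
    ∀ s ∈ Finset.Icc 1 (T - 1),
      ‖x s‖ ≤ Lam / (1 - Lam * specNorm A) *
        (Finset.Icc 1 (T - 1)).sup' (Finset.nonempty_Icc.mpr (by omega))
          (fun s' => ‖mulVecE B (u (s' - 1))‖) := by
  set M := (Finset.Icc 1 (T - 1)).sup' (Finset.nonempty_Icc.mpr (by omega))
    (fun s' => ‖mulVecE B (u (s' - 1))‖)
  have hBu : ∀ t < T - 1, ‖mulVecE B (u t)‖ ≤ M := fun t ht =>
    Finset.le_sup' (fun s' => ‖mulVecE B (u (s' - 1))‖)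
      (Finset.mem_Icc.2 ⟨by omega, by omega⟩ : t + 1 ∈ Finset.Icc 1 (T - 1))
  have hg : ∀ y, ‖g y‖ ≤ Lam * ‖y‖ := fun y => by simpa [hg0] using hsmooth 0 y
  have hstep : ∀ t < T - 1, ‖x (t + 1)‖ ≤ Lam * (specNorm A * ‖x t‖ + M) := fun t ht => by
    rw [hx t]
    refine (norm_apply_add_le hg hLam
      (LinearMap.toContinuousLinearMap (Matrix.toEuclideanLin A)) (x t) (mulVecE B (u t))).trans ?_
    unfold specNorm
    gcongr
    exact hBu t ht
  intro s hs
  exact le_div_one_sub_mul_of_le_affine (r := fun t => ‖x t‖) hLam (norm_nonneg _) hA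
    ((norm_nonneg _).trans (hBu 0 (by omega))) (by simp [hx0]) hstep s (Finset.mem_Icc.1 hs).2
end

section
/- Fix 0 < λ ≤ Λ and define f : ℝⁿ → ℝ by f(x) = (1/2) Σ_{i=1}^{n} max{ λ ((−x_i)₊)², Λ ((x_i)₊)² }, whose gradient has coordinates (∇f(x))_i = ((Λ+λ)/2) x_i + ((Λ−λ)/2)|x_i|, and define the diagonal matrix F(x) with diagonal entries F(x)_{ii} = (Λ+λ)/2 + ((Λ−λ)/2) sgn(x_i). Then for all x, y ∈ ℝⁿ, ‖ (∇f(x+y) − ∇f(x−y))/2 − F(x) y ‖₂ ≤ ((Λ−λ)/2) ‖y‖₂. -/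
open scoped RealInnerProductSpace

/-- The piecewise quadratic function `f(x) = (1/2) Σᵢ max{lam ((−xᵢ)₊)², Lam ((xᵢ)₊)²}`. -/
noncomputable def reluF (lam Lam : ℝ) {n : ℕ} (x : EuclideanSpace ℝ (Fin n)) : ℝ :=
  (1 / 2) * ∑ i, max (lam * max (-(x i)) 0 ^ 2) (Lam * max (x i) 0 ^ 2)

/-- The gradient of `reluF`, with coordinates `((Lam+lam)/2) xᵢ + ((Lam−lam)/2)|xᵢ|`. -/
noncomputable def reluGrad (lam Lam : ℝ) {n : ℕ} (x : EuclideanSpace ℝ (Fin n)) :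
    EuclideanSpace ℝ (Fin n) :=
  WithLp.toLp 2 (fun i => (Lam + lam) / 2 * x i + (Lam - lam) / 2 * |x i| : Fin n → ℝ)

/-- The diagonal matrix `F(x)` with entries `(Lam+lam)/2 + ((Lam−lam)/2) sgn(xᵢ)`. -/
noncomputable def reluFmat (lam Lam : ℝ) {n : ℕ} (x : EuclideanSpace ℝ (Fin n)) :
    Matrix (Fin n) (Fin n) ℝ :=
  Matrix.diagonal fun i => (Lam + lam) / 2 + (Lam - lam) / 2 * Real.sign (x i)


/-! The linear part of `reluGrad` cancels exactly against `F(x) y`, so coordinate `i` of the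
error is `(Lam - lam) / 2` times `(|a + b| - |a - b|) / 2 - sgn(a) b` with `a = xᵢ`, `b = yᵢ`.
Since `(|a + b| - |a - b|) / 2 = sgn(a) sgn(b) min(|a|, |b|)`, this has absolute value at most
`|b|`, and the Euclidean norm is monotone in the absolute values of the coordinates. -/

theorem abs_half_sub_sign_mul_le (a b : ℝ) :
    |(|a + b| - |a - b|) / 2 - Real.sign a * b| ≤ |b| := by
  rcases lt_trichotomy a 0 with ha | rfl | ha
  · rw [Real.sign_of_neg ha, abs_le]
    constructor <;>
      cases abs_cases (a + b) <;> cases abs_cases (a - b) <;> cases abs_cases b <;> linarith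
  · simp
  · rw [Real.sign_of_pos ha, abs_le]
    constructor <;>
      cases abs_cases (a + b) <;> cases abs_cases (a - b) <;> cases abs_cases b <;> linarith

theorem EuclideanSpace.norm_le_norm_of_forall_abs_le {ι : Type*} [Fintype ι]
    {v w : EuclideanSpace ℝ ι} (h : ∀ i, |v i| ≤ |w i|) : ‖v‖ ≤ ‖w‖ := by
  simp only [EuclideanSpace.norm_eq, Real.norm_eq_abs]
  exact Real.sqrt_le_sqrt <| Finset.sum_le_sum fun i _ => pow_le_pow_left₀ (abs_nonneg _) (h i) 2

theorem mulVecE_diagonal_apply {n : ℕ} (d : Fin n → ℝ) (v : EuclideanSpace ℝ (Fin n)) (i : Fin n) :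
    mulVecE (Matrix.diagonal d) v i = d i * v i := by
  simp [mulVecE, Matrix.mulVec_diagonal]

theorem reluGrad_symmDiff_sub_mulVecE_reluFmat_apply {n : ℕ} (lam Lam : ℝ)
    (x y : EuclideanSpace ℝ (Fin n)) (i : Fin n) :
    ((2 : ℝ)⁻¹ • (reluGrad lam Lam (x + y) - reluGrad lam Lam (x - y)) -
        mulVecE (reluFmat lam Lam x) y) i =
      (Lam - lam) / 2 * ((|x i + y i| - |x i - y i|) / 2 - Real.sign (x i) * y i) := by
  simp only [PiLp.sub_apply, PiLp.smul_apply, smul_eq_mul, reluFmat, mulVecE_diagonal_apply,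
    reluGrad, PiLp.add_apply]
  ring

theorem stmt13_general {n : ℕ} (lam Lam : ℝ) (hlamLam : lam ≤ Lam) :
    ∀ x y : EuclideanSpace ℝ (Fin n),
      ‖(2 : ℝ)⁻¹ • (reluGrad lam Lam (x + y) - reluGrad lam Lam (x - y)) -
          mulVecE (reluFmat lam Lam x) y‖ ≤ (Lam - lam) / 2 * ‖y‖ := by
  intro x y
  have hc : 0 ≤ (Lam - lam) / 2 := by linarith
  rw [← abs_of_nonneg hc, ← Real.norm_eq_abs, ← norm_smul]
  refine EuclideanSpace.norm_le_norm_of_forall_abs_le fun i => ?_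
  rw [reluGrad_symmDiff_sub_mulVecE_reluFmat_apply, PiLp.smul_apply, smul_eq_mul, abs_mul, abs_mul]
  exact mul_le_mul_of_nonneg_left (abs_half_sub_sign_mul_le (x i) (y i)) (abs_nonneg _)

/-- For the (leaky) ReLU-type function above,
`‖(∇f(x+y) − ∇f(x−y))/2 − F(x) y‖ ≤ ((Lam−lam)/2) ‖y‖` for all `x, y`. -/
theorem stmt13 {n : ℕ} (lam Lam : ℝ) (hlam : 0 < lam) (hlamLam : lam ≤ Lam) :
    ∀ x y : EuclideanSpace ℝ (Fin n),
      ‖(2 : ℝ)⁻¹ • (reluGrad lam Lam (x + y) - reluGrad lam Lam (x - y)) -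
          mulVecE (reluFmat lam Lam x) y‖ ≤ (Lam - lam) / 2 * ‖y‖ :=
  stmt13_general lam Lam hlamLam
end
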